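/- arXiv:2007.12173 — 2 statements merged into one kernel-verified Lean document; each statement's English description precedes it below -/
import Mathlib

section
/- Policy Averaging (Proposition 1). For every f-partial policy π with strictly positive entries (∀ o a, 0 < π o a), the imitation loss satisfies L(π̄) ≤ L(π); that is, the conditional average policy π̄, defined by π̄ o a = E_μ[πexp S a | f S = o], minimizes the expected cross-entropy imitation loss over all f-partial policies. -/
open Finset

/-- **Policy Averaging (Proposition 1).** The conditional average policy `πbar`,
defined on observations with positive fiber mass by
`πbar o a = (∑_{s : f s = o} μ s * πexp s a) / (∑_{s : f s = o} μ s)`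
(and uniform on zero-mass fibers), minimizes the expected cross-entropy imitation
loss over all `f`-partial policies `π` with strictly positive entries. -/
theorem policy_averaging
    {S A O : Type*} [Fintype S] [Fintype A] [Fintype O]
    [Nonempty S] [Nonempty A] [Nonempty O] [DecidableEq O]
    (μ : S → ℝ) (hμ0 : ∀ s, 0 ≤ μ s) (hμ1 : ∑ s, μ s = 1)
    (f : S → O)
    (πexp : S → A → ℝ)
    (hexp0 : ∀ s a, 0 ≤ πexp s a) (hexp1 : ∀ s, ∑ a, πexp s a = 1)
    (πbar : O → A → ℝ)
    (hbar_pos : ∀ o, 0 < ∑ s ∈ univ.filter (fun s => f s = o), μ s →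
      ∀ a, πbar o a =
        (∑ s ∈ univ.filter (fun s => f s = o), μ s * πexp s a) /
          (∑ s ∈ univ.filter (fun s => f s = o), μ s))
    (hbar_zero : ∀ o, (∑ s ∈ univ.filter (fun s => f s = o), μ s) = 0 →
      ∀ a, πbar o a = 1 / (Fintype.card A : ℝ))
    (π : O → A → ℝ)
    (hπpos : ∀ o a, 0 < π o a)
    (hπsum : ∀ o, ∑ a, π o a = 1) :
    ∑ s, μ s * ∑ a, πexp s a * (- Real.log (πbar (f s) a)) ≤
      ∑ s, μ s * ∑ a, πexp s a * (- Real.log (π (f s) a)) := by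
  have key : ∀ (g : O → A → ℝ),
      ∑ s, μ s * ∑ a, πexp s a * (- Real.log (g (f s) a))
        = ∑ o, ∑ a, (∑ s ∈ univ.filter (fun s => f s = o), μ s * πexp s a)
            * (- Real.log (g o a)) := by
    intro g
    rw [← Finset.sum_fiberwise univ f
      (fun s => μ s * ∑ a, πexp s a * (- Real.log (g (f s) a)))]
    refine Finset.sum_congr rfl fun o _ => ?_
    calc ∑ s ∈ univ.filter (fun s => f s = o), μ s * ∑ a, πexp s a * (- Real.log (g (f s) a))
        = ∑ s ∈ univ.filter (fun s => f s = o), ∑ a, μ s * πexp s a * (- Real.log (g o a)) := by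
          refine Finset.sum_congr rfl fun s hs => ?_
          rw [Finset.mem_filter] at hs
          rw [hs.2, Finset.mul_sum]
          exact Finset.sum_congr rfl fun a _ => by ring
      _ = ∑ a, ∑ s ∈ univ.filter (fun s => f s = o), μ s * πexp s a * (- Real.log (g o a)) :=
          Finset.sum_comm
      _ = _ := Finset.sum_congr rfl fun a _ => by rw [Finset.sum_mul]
  rw [key, key]
  refine Finset.sum_le_sum fun o _ => ?_
  set W := ∑ s ∈ univ.filter (fun s => f s = o), μ s with hW
  set T := fun a => ∑ s ∈ univ.filter (fun s => f s = o), μ s * πexp s a with hT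
  have hT0 : ∀ a, 0 ≤ T a := fun a =>
    Finset.sum_nonneg fun s _ => mul_nonneg (hμ0 s) (hexp0 s a)
  have hTW : ∑ a, T a = W := by
    rw [Finset.sum_comm]
    refine Finset.sum_congr rfl fun s _ => ?_
    rw [← Finset.mul_sum, hexp1 s, mul_one]
  have hW0 : 0 ≤ W := Finset.sum_nonneg fun s _ => hμ0 s
  rcases hW0.lt_or_eq with hWpos | hWzero
  · -- positive mass
    have hbar : ∀ a, πbar o a = T a / W := hbar_pos o hWpos
    have main : ∑ a, (T a * Real.log (π o a) - T a * Real.log (T a / W)) ≤ 0 := by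
      calc ∑ a, (T a * Real.log (π o a) - T a * Real.log (T a / W))
          ≤ ∑ a, (W * π o a - T a) := by
            refine Finset.sum_le_sum fun a _ => ?_
            rcases (hT0 a).lt_or_eq with hTa | hTa
            · have hq : 0 < T a / W := div_pos hTa hWpos
              have hx : 0 < π o a / (T a / W) := div_pos (hπpos o a) hq
              have hlog := Real.log_le_sub_one_of_pos hx
              rw [Real.log_div (hπpos o a).ne' hq.ne'] at hlog
              have hmul := mul_le_mul_of_nonneg_left hlog (hT0 a)
              calc T a * Real.log (π o a) - T a * Real.log (T a / W)
                  = T a * (Real.log (π o a) - Real.log (T a / W)) := by ring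
                _ ≤ T a * (π o a / (T a / W) - 1) := hmul
                _ = W * π o a - T a := by field_simp
            · rw [← hTa]; simp [mul_nonneg hW0 (hπpos o a).le]
        _ = 0 := by
            rw [Finset.sum_sub_distrib, ← Finset.mul_sum, hπsum o, hTW, mul_one, sub_self]
    rw [Finset.sum_sub_distrib] at main
    simp only [hbar, mul_neg]
    rw [Finset.sum_neg_distrib, Finset.sum_neg_distrib]
    linarith
  · -- zero mass fiber
    have hμz : ∀ s ∈ univ.filter (fun s => f s = o), μ s = 0 :=
      (Finset.sum_eq_zero_iff_of_nonneg fun s _ => hμ0 s).mp hWzero.symm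
    have hTz : ∀ a, T a = 0 := fun a =>
      Finset.sum_eq_zero fun s hs => by rw [hμz s hs, zero_mul]
    have hz : ∀ a, (∑ s ∈ univ.filter (fun s => f s = o), μ s * πexp s a) = 0 := hTz
    simp [hz]
end

section
/- KL-divergence form of Policy Averaging. For every f-partial policy π with strictly positive entries (∀ o a, 0 < π o a), the expected KL divergence from the expert satisfies ∑_s μ s * ∑_a πexp s a * Real.log (πexp s a / π̄ (f s) a) ≤ ∑_s μ s * ∑_a πexp s a * Real.log (πexp s a / π (f s) a); that is, the conditional average policy π̄ also minimizes the expected KL divergence between the expert policy and an f-partial student policy. -/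
open Finset

/-! Splitting `log (πexp / π) = log (πexp / π̄) + log (π̄ / π)` reduces the claim to the
nonnegativity of `∑ₛ μ s ∑ₐ πexp s a * log (π̄ (f s) a / π (f s) a)`. Since this summand
depends on `s` only through the observation `f s`, regrouping the sum along the fibres of `f`
turns it into `∑ₒ μ(f⁻¹ o) * KL(π̄ o ‖ π o)`, which is nonnegative by Gibbs' inequality. -/

lemma sub_le_mul_log_div {p q : ℝ} (hp : 0 ≤ p) (hq : 0 < q) :
    p - q ≤ p * Real.log (p / q) := by
  have h := mul_le_mul_of_nonneg_left (Real.self_sub_one_le_mul_log (div_nonneg hp hq.le)) hq.le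
  rwa [mul_sub, mul_one, mul_div_cancel₀ _ hq.ne', ← mul_assoc, mul_div_cancel₀ _ hq.ne'] at h

theorem sum_mul_log_div_nonneg {ι : Type*} (s : Finset ι) {p q : ι → ℝ}
    (hp : ∀ i ∈ s, 0 ≤ p i) (hq : ∀ i ∈ s, 0 < q i)
    (hpq : ∑ i ∈ s, p i = ∑ i ∈ s, q i) :
    0 ≤ ∑ i ∈ s, p i * Real.log (p i / q i) :=
  calc 0 = ∑ i ∈ s, (p i - q i) := by rw [sum_sub_distrib, hpq, sub_self]
    _ ≤ _ := sum_le_sum fun i hi => sub_le_mul_log_div (hp i hi) (hq i hi)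

lemma mul_log_div_eq_add {p q r : ℝ} (hq : p ≠ 0 → q ≠ 0) (hr : r ≠ 0) :
    p * Real.log (p / r) = p * Real.log (p / q) + p * Real.log (q / r) := by
  rcases eq_or_ne p 0 with rfl | hp
  · simp
  · rw [← mul_add, ← Real.log_mul (div_ne_zero hp (hq hp)) (div_ne_zero (hq hp) hr),
      div_mul_div_cancel₀ (hq hp)]

section ConditionalAverage

variable {S A O : Type*} [Fintype S] [DecidableEq O]

def fiberMass (μ : S → ℝ) (f : S → O) (o : O) : ℝ :=
  ∑ s ∈ univ.filter (fun s => f s = o), μ s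

lemma fiberMass_nonneg {μ : S → ℝ} (hμ : ∀ s, 0 ≤ μ s) (f : S → O) (o : O) :
    0 ≤ fiberMass μ f o :=
  sum_nonneg fun s _ => hμ s

def IsConditionalAverage (μ : S → ℝ) (f : S → O) (πexp : S → A → ℝ)
    (πbar : O → A → ℝ) : Prop :=
  ∀ o, 0 < fiberMass μ f o → ∀ a,
    πbar o a = (∑ s ∈ univ.filter (fun s => f s = o), μ s * πexp s a) / fiberMass μ f o

namespace IsConditionalAverage

variable {μ : S → ℝ} {f : S → O} {πexp : S → A → ℝ} {πbar : O → A → ℝ}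

theorem sum_fiber_mul_eq (h : IsConditionalAverage μ f πexp πbar) (hμ : ∀ s, 0 ≤ μ s)
    (o : O) (a : A) :
    ∑ s ∈ univ.filter (fun s => f s = o), μ s * πexp s a = fiberMass μ f o * πbar o a := by
  rcases (fiberMass_nonneg hμ f o).eq_or_lt with hzero | hpos
  · have hμzero := (sum_eq_zero_iff_of_nonneg fun s _ => hμ s).mp hzero.symm
    rw [← hzero, zero_mul]
    exact sum_eq_zero fun s hs => by rw [hμzero s hs, zero_mul]
  · rw [h o hpos a, mul_div_cancel₀ _ hpos.ne']

theorem nonneg (h : IsConditionalAverage μ f πexp πbar) (hμ : ∀ s, 0 ≤ μ s)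
    (hexp : ∀ s a, 0 ≤ πexp s a) {o : O} (hpos : 0 < fiberMass μ f o) (a : A) :
    0 ≤ πbar o a := by
  rw [h o hpos a]
  exact div_nonneg (sum_nonneg fun s _ => mul_nonneg (hμ s) (hexp s a)) hpos.le

theorem pos_of_pos (h : IsConditionalAverage μ f πexp πbar) (hμ : ∀ s, 0 ≤ μ s)
    (hexp : ∀ s a, 0 ≤ πexp s a) {s : S} {a : A} (hμs : 0 < μ s)
    (hexps : 0 < πexp s a) :
    0 < πbar (f s) a := by
  have hprod : 0 < fiberMass μ f (f s) * πbar (f s) a := by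
    rw [← h.sum_fiber_mul_eq hμ]
    exact sum_pos' (fun t _ => mul_nonneg (hμ t) (hexp t a))
      ⟨s, by simp, mul_pos hμs hexps⟩
  exact pos_of_mul_pos_right hprod (fiberMass_nonneg hμ f _)

theorem sum_eq_one [Fintype A] (h : IsConditionalAverage μ f πexp πbar)
    (hμ : ∀ s, 0 ≤ μ s) (hexp : ∀ s, ∑ a, πexp s a = 1) {o : O}
    (hpos : 0 < fiberMass μ f o) :
    ∑ a, πbar o a = 1 := by
  refine mul_left_cancel₀ hpos.ne' ?_
  calc fiberMass μ f o * ∑ a, πbar o a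
      = ∑ a, ∑ s ∈ univ.filter (fun s => f s = o), μ s * πexp s a := by
        simp only [mul_sum, h.sum_fiber_mul_eq hμ]
    _ = fiberMass μ f o * 1 := by
        rw [sum_comm, mul_one, fiberMass]
        simp only [← mul_sum, hexp, mul_one]

theorem sum_mul_sum_comp_eq [Fintype A] [Fintype O]
    (h : IsConditionalAverage μ f πexp πbar) (hμ : ∀ s, 0 ≤ μ s) (g : O → A → ℝ) :
    ∑ s, μ s * ∑ a, πexp s a * g (f s) a = ∑ o, fiberMass μ f o * ∑ a, πbar o a * g o a := by
  rw [← sum_fiberwise univ f]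
  refine sum_congr rfl fun o _ => ?_
  calc ∑ s ∈ univ.filter (fun s => f s = o), μ s * ∑ a, πexp s a * g (f s) a
      = ∑ a, (∑ s ∈ univ.filter (fun s => f s = o), μ s * πexp s a) * g o a := by
        simp only [sum_mul]
        rw [sum_comm]
        refine sum_congr rfl fun s hs => ?_
        rw [(mem_filter.mp hs).2, mul_sum]
        simp only [mul_assoc]
    _ = fiberMass μ f o * ∑ a, πbar o a * g o a := by
        simp only [h.sum_fiber_mul_eq hμ, mul_sum, mul_assoc]

end IsConditionalAverage

end ConditionalAverage

theorem policy_averaging_kl_general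
    {S A O : Type*} [Fintype S] [Fintype A] [Fintype O]
    [DecidableEq O]
    (μ : S → ℝ) (hμ0 : ∀ s, 0 ≤ μ s)
    (f : S → O)
    (πexp : S → A → ℝ)
    (hexp0 : ∀ s a, 0 ≤ πexp s a) (hexp1 : ∀ s, ∑ a, πexp s a = 1)
    (πbar : O → A → ℝ)
    (hbar_pos : ∀ o, 0 < ∑ s ∈ univ.filter (fun s => f s = o), μ s →
      ∀ a, πbar o a =
        (∑ s ∈ univ.filter (fun s => f s = o), μ s * πexp s a) /
          (∑ s ∈ univ.filter (fun s => f s = o), μ s))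
    (π : O → A → ℝ)
    (hπpos : ∀ o a, 0 < π o a)
    (hπsum : ∀ o, ∑ a, π o a = 1) :
    ∑ s, μ s * ∑ a, πexp s a * Real.log (πexp s a / πbar (f s) a) ≤
      ∑ s, μ s * ∑ a, πexp s a * Real.log (πexp s a / π (f s) a) := by
  have hbar : IsConditionalAverage μ f πexp πbar := hbar_pos
  have hsplit : ∀ s, μ s * ∑ a, πexp s a * Real.log (πexp s a / π (f s) a) =
      μ s * ∑ a, πexp s a * Real.log (πexp s a / πbar (f s) a) +
        μ s * ∑ a, πexp s a * Real.log (πbar (f s) a / π (f s) a) := by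
    intro s
    rcases (hμ0 s).eq_or_lt with hμs | hμs
    · simp [← hμs]
    rw [← mul_add, ← sum_add_distrib]
    refine congrArg _ (sum_congr rfl fun a _ =>
      mul_log_div_eq_add (fun hne => ?_) (hπpos _ a).ne')
    exact (hbar.pos_of_pos hμ0 hexp0 hμs ((hexp0 s a).lt_of_ne' hne)).ne'
  rw [sum_congr rfl fun s _ => hsplit s, sum_add_distrib, le_add_iff_nonneg_right,
    hbar.sum_mul_sum_comp_eq hμ0 fun o a => Real.log (πbar o a / π o a)]
  refine sum_nonneg fun o _ => ?_
  rcases (fiberMass_nonneg hμ0 f o).eq_or_lt with hzero | hpos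
  · rw [← hzero, zero_mul]
  · exact mul_nonneg hpos.le <| sum_mul_log_div_nonneg univ
      (fun a _ => hbar.nonneg hμ0 hexp0 hpos a) (fun a _ => hπpos o a)
      (by rw [hbar.sum_eq_one hμ0 hexp1 hpos, hπsum])

/-- **KL-divergence form of Policy Averaging.** The conditional average policy `πbar`
minimizes the expected KL divergence between the expert policy and an `f`-partial
student policy with strictly positive entries. -/
theorem policy_averaging_kl
    {S A O : Type*} [Fintype S] [Fintype A] [Fintype O]
    [Nonempty S] [Nonempty A] [Nonempty O] [DecidableEq O]
    (μ : S → ℝ) (hμ0 : ∀ s, 0 ≤ μ s) (hμ1 : ∑ s, μ s = 1)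
    (f : S → O)
    (πexp : S → A → ℝ)
    (hexp0 : ∀ s a, 0 ≤ πexp s a) (hexp1 : ∀ s, ∑ a, πexp s a = 1)
    (πbar : O → A → ℝ)
    (hbar_pos : ∀ o, 0 < ∑ s ∈ univ.filter (fun s => f s = o), μ s →
      ∀ a, πbar o a =
        (∑ s ∈ univ.filter (fun s => f s = o), μ s * πexp s a) /
          (∑ s ∈ univ.filter (fun s => f s = o), μ s))
    (hbar_zero : ∀ o, (∑ s ∈ univ.filter (fun s => f s = o), μ s) = 0 →
      ∀ a, πbar o a = 1 / (Fintype.card A : ℝ))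
    (π : O → A → ℝ)
    (hπpos : ∀ o a, 0 < π o a)
    (hπsum : ∀ o, ∑ a, π o a = 1) :
    ∑ s, μ s * ∑ a, πexp s a * Real.log (πexp s a / πbar (f s) a) ≤
      ∑ s, μ s * ∑ a, πexp s a * Real.log (πexp s a / π (f s) a) :=
  policy_averaging_kl_general μ hμ0 f πexp hexp0 hexp1 πbar hbar_pos π hπpos hπsum
end
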